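/- Let G be a finite simple graph with positive real vertex weights ω, and let u, v be vertices forming a u-v-funnel (i.e., u ∈ N(v) and N(v) \ {u} is a clique in G). If ω(v) ≥ ω(x) for every x ∈ N(v) \ {u}, then there exists a maximum ω-weight independent set of G containing u or containing v. -/

import Mathlib

open scoped Classical

/-- `S` is an independent set of vertices in `G`: no two members are adjacent. -/
def IsIndepSet {V : Type*} (G : SimpleGraph V) (S : Finset V) : Prop :=
  ∀ a ∈ S, ∀ b ∈ S, ¬ G.Adj a b

/-- The maximum total `w`-weight of an independent set of `G` contained in `A`
(the weighted independence number of the subgraph of `G` induced on `A`). -/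
noncomputable def alphaOn {V : Type*} [Fintype V] (G : SimpleGraph V) (w : V → ℝ)
    (A : Set V) : ℝ :=
  sSup {x : ℝ | ∃ S : Finset V, ↑S ⊆ A ∧ IsIndepSet G S ∧ x = ∑ v ∈ S, w v}

/-- The maximum total `w`-weight of an independent set of `G`. -/
noncomputable def alpha {V : Type*} [Fintype V] (G : SimpleGraph V) (w : V → ℝ) : ℝ :=
  alphaOn G w Set.univ

/-- `S` is a maximum `w`-weight independent set of `G`. -/
def IsMWIS {V : Type*} [Fintype V] (G : SimpleGraph V) (w : V → ℝ) (S : Finset V) : Prop :=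
  IsIndepSet G S ∧ ∑ v ∈ S, w v = alpha G w

/-- The closed neighborhood `N[v]` of a vertex. -/
def closedNbhd {V : Type*} (G : SimpleGraph V) (v : V) : Set V :=
  insert v (G.neighborSet v)

/-- The open neighborhood `N(S)` of a set of vertices. -/
def setNbhd {V : Type*} (G : SimpleGraph V) (S : Set V) : Set V :=
  (⋃ s ∈ S, G.neighborSet s) \ S

/-- The closed neighborhood `N[S]` of a set of vertices. -/
def closedSetNbhd {V : Type*} (G : SimpleGraph V) (S : Set V) : Set V :=
  setNbhd G S ∪ S

/-!
Take a maximum weight independent set `S` containing neither `u` nor `v`. As `u ∉ S` and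
`N(v) \ {u}` is a clique, `S` contains at most one neighbor of `v`, and its weight is at most
`ω(v)`. Replacing the neighbors of `v` in `S` by `v` therefore gives an independent set of no
smaller weight that contains `v`.
-/

namespace IsIndepSet

variable {V : Type*} {G : SimpleGraph V}

theorem insert_filter_not_adj {S : Finset V} (hS : IsIndepSet G S) (v : V) :
    IsIndepSet G (insert v (S.filter (¬ G.Adj v ·))) := by
  intro a ha b hb hab
  simp only [Finset.mem_insert, Finset.mem_filter] at ha hb
  rcases ha with rfl | ⟨haS, hva⟩ <;> rcases hb with rfl | ⟨hbS, hvb⟩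
  · exact G.loopless.irrefl _ hab
  · exact hvb hab
  · exact hva hab.symm
  · exact hS a haS b hbS hab

theorem mono {S T : Finset V} (hT : IsIndepSet G T) (hST : S ⊆ T) : IsIndepSet G S :=
  fun a ha b hb => hT a (hST ha) b (hST hb)

theorem subsingleton_of_isClique {S : Finset V} (hS : IsIndepSet G S)
    (hK : G.IsClique (S : Set V)) : ∀ a ∈ S, ∀ b ∈ S, a = b := fun a ha b hb =>
  by_contra fun hab => hS a ha b hb (hK ha hb hab)

end IsIndepSet

section alphaOn

variable {V : Type*} [Fintype V] (G : SimpleGraph V) (w : V → ℝ)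

theorem finite_indepSums (A : Set V) :
    {x : ℝ | ∃ S : Finset V, ↑S ⊆ A ∧ IsIndepSet G S ∧ x = ∑ v ∈ S, w v}.Finite :=
  (Set.finite_range fun S : Finset V => ∑ v ∈ S, w v).subset fun _ ⟨S, _, _, hx⟩ => ⟨S, hx.symm⟩

theorem sum_le_alphaOn {A : Set V} {S : Finset V} (hSA : ↑S ⊆ A) (hS : IsIndepSet G S) :
    ∑ v ∈ S, w v ≤ alphaOn G w A :=
  le_csSup (finite_indepSums G w A).bddAbove ⟨S, hSA, hS, rfl⟩

theorem exists_eq_alphaOn (A : Set V) :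
    ∃ S : Finset V, ↑S ⊆ A ∧ IsIndepSet G S ∧ ∑ v ∈ S, w v = alphaOn G w A := by
  have hne : {x : ℝ | ∃ S : Finset V, ↑S ⊆ A ∧ IsIndepSet G S ∧ x = ∑ v ∈ S, w v}.Nonempty :=
    ⟨0, ∅, by simp, fun _ h => absurd h (Finset.notMem_empty _), by simp⟩
  obtain ⟨S, hSA, hS, hsum⟩ := hne.csSup_mem (finite_indepSums G w A)
  exact ⟨S, hSA, hS, hsum.symm⟩

theorem exists_isMWIS : ∃ S : Finset V, IsMWIS G w S := by
  obtain ⟨S, -, hS, hsum⟩ := exists_eq_alphaOn G w Set.univ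
  exact ⟨S, hS, hsum⟩

theorem isMWIS_of_alpha_le {S : Finset V} (hS : IsIndepSet G S)
    (hle : alpha G w ≤ ∑ v ∈ S, w v) : IsMWIS G w S :=
  ⟨hS, le_antisymm (sum_le_alphaOn G w (Set.subset_univ _) hS) hle⟩

end alphaOn

section funnel

variable {V : Type*} {G : SimpleGraph V} {w : V → ℝ} {u v : V} {S : Finset V}

theorem sum_filter_adj_le_of_isClique (hS : IsIndepSet G S) (huS : u ∉ S)
    (hclique : G.IsClique (G.neighborSet v \ {u}))
    (hwt : ∀ x ∈ G.neighborSet v \ {u}, w x ≤ w v) (hv : 0 ≤ w v) :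
    ∑ x ∈ S.filter (G.Adj v), w x ≤ w v := by
  have hsub : ↑(S.filter (G.Adj v)) ⊆ G.neighborSet v \ {u} := fun x hx => by
    obtain ⟨hxS, hvx⟩ := Finset.mem_filter.mp hx
    exact ⟨hvx, fun hxu => huS (Set.mem_singleton_iff.mp hxu ▸ hxS)⟩
  have hone := (hS.mono (Finset.filter_subset _ S)).subsingleton_of_isClique (hclique.subset hsub)
  obtain hempty | ⟨x, hx⟩ := (S.filter (G.Adj v)).eq_empty_or_nonempty
  · simpa [hempty] using hv
  · rw [Finset.eq_singleton_iff_unique_mem.mpr ⟨hx, fun y hy => hone y hy x hx⟩,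
      Finset.sum_singleton]
    exact hwt x (hsub hx)

end funnel

theorem stmt_10_general {V : Type*} [Fintype V] (G : SimpleGraph V) (w : V → ℝ)
    (hw : ∀ x, 0 < w x) (u v : V)
    (hclique : G.IsClique (G.neighborSet v \ {u}))
    (hwt : ∀ x ∈ G.neighborSet v \ {u}, w x ≤ w v) :
    ∃ S : Finset V, IsMWIS G w S ∧ (u ∈ S ∨ v ∈ S) := by
  obtain ⟨S, hS, hSα⟩ := exists_isMWIS G w
  by_cases huv : u ∈ S ∨ v ∈ S
  · exact ⟨S, ⟨hS, hSα⟩, huv⟩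
  obtain ⟨huS, hvS⟩ := not_or.mp huv
  have hvT : v ∉ S.filter (¬ G.Adj v ·) := fun h => hvS (Finset.mem_filter.mp h).1
  have hsplit := Finset.sum_filter_add_sum_filter_not S (G.Adj v) w
  have hN := sum_filter_adj_le_of_isClique hS huS hclique hwt (hw v).le
  refine ⟨_, isMWIS_of_alpha_le G w (hS.insert_filter_not_adj v) ?_,
    .inr (Finset.mem_insert_self _ _)⟩
  rw [Finset.sum_insert hvT]
  linarith

theorem stmt_10 {V : Type*} [Fintype V] (G : SimpleGraph V) (w : V → ℝ)
    (hw : ∀ x, 0 < w x) (u v : V)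
    (hu : u ∈ G.neighborSet v)
    (hclique : G.IsClique (G.neighborSet v \ {u}))
    (hwt : ∀ x ∈ G.neighborSet v \ {u}, w x ≤ w v) :
    ∃ S : Finset V, IsMWIS G w S ∧ (u ∈ S ∨ v ∈ S) :=
  stmt_10_general G w hw u v hclique hwt
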